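/- The entropy of the stationary representation of the absorbed chain equals h(𝕐^{(𝒜)}) = -(1-γ) ∑_{j∈I} μ(j) log μ(j) - ∑_{i,j∈I} μ(i) P(i,j) log P(i,j) - ∑_{i∈I, δ∈ℰ} μ(i) P(i,δ) log P(i,δ). -/

import Mathlib

/-!
Each row of `A` at a state `(i, j, d)` depends only on `j`: it continues inside `I` with the
row `P(j, ·)`, or is absorbed at `ε` and restarts from `μ`. Its entropy is therefore
`H(P(j, ·)) + P(j, ℰ) · H(μ)`, by the chain rule for `negMulLog (x * y)`.
The `j`-marginal of `η` is `γ μ(j) + (1 - γ) μ(j) = μ(j)`: the first term is quasi-stationarity,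
the second the total exit mass `∑ μ(i) P(i, ℰ) = 1 - γ`. Averaging the row entropies against `μ`
and using the exit mass once more gives the formula.
-/

open Finset Matrix Real

theorem sum_sum_negMulLog_mul_of_sum_eq_one {α β : Type*} [Fintype α] [Fintype β]
    (q : α → ℝ) (μ : β → ℝ) (hμ1 : ∑ b, μ b = 1) :
    ∑ a, ∑ b, negMulLog (q a * μ b)
      = ∑ a, negMulLog (q a) + (∑ a, q a) * ∑ b, negMulLog (μ b) := by
  simp only [negMulLog_mul, Finset.sum_add_distrib, ← Finset.sum_mul, ← Finset.mul_sum, hμ1,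
    one_mul]

theorem sum_mul_eq_sum_marginal_mul {α β γ : Type*} [Fintype α] [Fintype β] [Fintype γ]
    (η R : α × β × γ → ℝ) (S : β → ℝ) (hR : ∀ i j d, R (i, j, d) = S j) :
    ∑ x, η x * R x = ∑ j, (∑ i, ∑ d, η (i, j, d)) * S j := by
  simp only [Fintype.sum_prod_type, hR, Finset.sum_mul]
  exact Finset.sum_comm

section AbsorbedChain

variable {I E : Type*} [Fintype I]

theorem sum_mul_sum_inr_eq_one_sub [Fintype E] (P : Matrix (I ⊕ E) (I ⊕ E) ℝ)
    (hP1 : ∀ a, ∑ b, P a b = 1) (μ : I → ℝ) (hμ1 : ∑ i, μ i = 1) :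
    ∑ i, μ i * ∑ δ, P (Sum.inl i) (Sum.inr δ)
      = 1 - ∑ i, ∑ j, μ i * P (Sum.inl i) (Sum.inl j) := by
  have hrow : ∀ i, ∑ δ, P (Sum.inl i) (Sum.inr δ) = 1 - ∑ j, P (Sum.inl i) (Sum.inl j) := by
    intro i
    have h := hP1 (Sum.inl i)
    rw [Fintype.sum_sum_type] at h
    linarith
  simp only [hrow, mul_sub, mul_one, Finset.sum_sub_distrib, hμ1, Finset.mul_sum]

theorem sum_mul_submatrix_eq_of_vecMul_eq (P : Matrix (I ⊕ E) (I ⊕ E) ℝ) (μ : I → ℝ) (γ : ℝ)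
    (hqsd : μ ᵥ* (P.submatrix Sum.inl Sum.inl) = γ • μ) (j : I) :
    ∑ i, μ i * P (Sum.inl i) (Sum.inl j) = γ * μ j := by
  simpa [Matrix.vecMul, dotProduct] using congrFun hqsd j

theorem sum_negMulLog_absorbedKernel [Fintype E]
    (P : Matrix (I ⊕ E) (I ⊕ E) ℝ) (μ : I → ℝ) (hμ1 : ∑ i, μ i = 1)
    (A : I × I × Option E → I × I × Option E → ℝ) (i j : I) (d : Option E)
    (hAoff : ∀ l ≠ j, ∀ k e, A (i, j, d) (l, k, e) = 0)
    (hAin : ∀ k, A (i, j, d) (j, k, none) = P (Sum.inl j) (Sum.inl k))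
    (hAexit : ∀ k ε, A (i, j, d) (j, k, some ε) = P (Sum.inl j) (Sum.inr ε) * μ k) :
    ∑ y, negMulLog (A (i, j, d) y)
      = ∑ k, negMulLog (P (Sum.inl j) (Sum.inl k))
        + (∑ ε, negMulLog (P (Sum.inl j) (Sum.inr ε))
          + (∑ ε, P (Sum.inl j) (Sum.inr ε)) * ∑ k, negMulLog (μ k)) := by
  have hoff : ∀ l ≠ j, ∑ y : I × Option E, negMulLog (A (i, j, d) (l, y)) = 0 := fun l hl ↦
    Finset.sum_eq_zero fun y _ ↦ by simp [hAoff l hl]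
  rw [Fintype.sum_prod_type, Finset.sum_eq_single_of_mem j (Finset.mem_univ j) fun l _ ↦ hoff l,
    Fintype.sum_prod_type]
  simp only [Fintype.sum_option, hAin, hAexit, Finset.sum_add_distrib]
  rw [Finset.sum_comm, sum_sum_negMulLog_mul_of_sum_eq_one _ _ hμ1]

theorem sum_sum_stationaryLaw_eq_of_vecMul_eq [Fintype E] (P : Matrix (I ⊕ E) (I ⊕ E) ℝ)
    (hP1 : ∀ a, ∑ b, P a b = 1) (μ : I → ℝ) (hμ1 : ∑ i, μ i = 1) (γ : ℝ)
    (hγdef : γ = ∑ i : I, ∑ j : I, μ i * P (Sum.inl i) (Sum.inl j))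
    (hqsd : μ ᵥ* (P.submatrix Sum.inl Sum.inl) = γ • μ) (η : I × I × Option E → ℝ) (j : I)
    (hηin : ∀ i, η (i, j, none) = μ i * P (Sum.inl i) (Sum.inl j))
    (hηexit : ∀ i δ, η (i, j, some δ) = μ i * P (Sum.inl i) (Sum.inr δ) * μ j) :
    ∑ i, ∑ d, η (i, j, d) = μ j := by
  have hexit : ∑ i, ∑ δ, μ i * P (Sum.inl i) (Sum.inr δ) * μ j = (1 - γ) * μ j := by
    simp only [← Finset.sum_mul, ← Finset.mul_sum, sum_mul_sum_inr_eq_one_sub P hP1 μ hμ1,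
      hγdef]
  simp only [Fintype.sum_option, hηin, hηexit, Finset.sum_add_distrib, hexit,
    sum_mul_submatrix_eq_of_vecMul_eq P μ γ hqsd]
  ring

end AbsorbedChain

theorem absorbed_entropy_formula {I E : Type*} [Fintype I] [Fintype E]
    [DecidableEq I]
    (P : Matrix (I ⊕ E) (I ⊕ E) ℝ)
    (hP1 : ∀ a, ∑ b, P a b = 1)
    (μ : I → ℝ) (hμ1 : ∑ i, μ i = 1)
    (γ : ℝ) (hγdef : γ = ∑ i : I, ∑ j : I, μ i * P (Sum.inl i) (Sum.inl j))
    (hqsd : μ ᵥ* (P.submatrix Sum.inl Sum.inl) = γ • μ)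
    (A : I × I × Option E → I × I × Option E → ℝ)
    (hA : ∀ (i j l k : I) (d e : Option E),
      A (i, j, d) (l, k, e)
        = if l = j then
            (match e with
              | none => P (Sum.inl j) (Sum.inl k)
              | some ε => P (Sum.inl j) (Sum.inr ε) * μ k)
          else 0)
    (η : I × I × Option E → ℝ)
    (hη : ∀ (i j : I) (d : Option E),
      η (i, j, d)
        = match d with
          | none => μ i * P (Sum.inl i) (Sum.inl j)
          | some δ => μ i * P (Sum.inl i) (Sum.inr δ) * μ j) :
    (∑ x : I × I × Option E, η x * ∑ y : I × I × Option E, negMulLog (A x y))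
      = (1 - γ) * (∑ j : I, negMulLog (μ j))
        + (∑ i : I, ∑ j : I, μ i * negMulLog (P (Sum.inl i) (Sum.inl j)))
        + ∑ i : I, ∑ δ : E, μ i * negMulLog (P (Sum.inl i) (Sum.inr δ)) := by
  have hrow i j d := sum_negMulLog_absorbedKernel P μ hμ1 A i j d
    (fun l hl k e ↦ by simp [hA, hl]) (fun k ↦ by simp [hA]) (fun k ε ↦ by simp [hA])
  have hmarg j := sum_sum_stationaryLaw_eq_of_vecMul_eq P hP1 μ hμ1 γ hγdef hqsd η j
    (fun i ↦ by simp [hη]) (fun i δ ↦ by simp [hη])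
  rw [sum_mul_eq_sum_marginal_mul η _ _ hrow]
  have hexit : ∑ j, μ j * ((∑ ε, P (Sum.inl j) (Sum.inr ε)) * ∑ k, negMulLog (μ k))
      = (1 - γ) * ∑ k, negMulLog (μ k) := by
    rw [hγdef, ← sum_mul_sum_inr_eq_one_sub P hP1 μ hμ1, Finset.sum_mul]
    simp only [mul_assoc]
  simp only [hmarg, mul_add, Finset.sum_add_distrib]
  rw [hexit]
  simp only [Finset.mul_sum]
  ring
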